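/- arXiv:1511.07218 — 2 statements merged into one kernel-verified Lean document; each statement's English description precedes it below -/
import Mathlib

section
/- Suppose that for all i ∈ {1,…,m} and all u ∈ ℝⁿ the limit C_i(u) := lim_{t→∞} f_i(t H_i u)/t exists and is finite, and that for every nonzero u ∈ ℝⁿ and every index set I ⊆ {1,…,m} with |I| = p one has Σ_{i∈I} C_i(u) < Σ_{i∉I} C_i(u). Then for every z = (z_1,…,z_m) there exists β ≥ 0 such that for every (p,m)-sparse attack a, every u ∈ ℝⁿ with ‖u‖ = 1, and every t ≥ β, writing y_i = z_i + a_i, one has Σ_{i=1}^m f_i(y_i − t H_i u) < Σ_{i=1}^m f_i(y_i − (t+1) H_i u). -/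
/-!
If a convex `g` has asymptotic slope `c` along `v`, then the unit increments
`s ↦ g (x + (s + 1) • v) - g (x + s • v)` are nondecreasing and tend to `c`, whatever the base
point `x`. So moving the estimate one unit further along `u` lowers the cost of an attacked sensor
by at most `C i u`, while the cost of every unattacked sensor eventually rises by almost `C i u`;
the majority condition makes the rise win. Since the increments are monotone in `t`, compactness
of the unit sphere makes the threshold uniform in `u`, and there are only finitely many possible
supports of the attack.
-/

open Filter Set Topology

theorem convexOn_of_tendsto {ι E : Type*} [AddCommGroup E] [Module ℝ E] {l : Filter ι} [l.NeBot]
    {s : Set E} {F : ι → E → ℝ} {G : E → ℝ} (hF : ∀ᶠ i in l, ConvexOn ℝ s (F i))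
    (hs : Convex ℝ s) (hG : ∀ x ∈ s, Tendsto (F · x) l (𝓝 (G x))) : ConvexOn ℝ s G :=
  ⟨hs, fun x hx y hy a b ha hb hab =>
    le_of_tendsto_of_tendsto (hG _ (hs hx hy ha hb hab))
      (((hG x hx).const_smul a).add ((hG y hy).const_smul b))
      (hF.mono fun _ hi => hi.2 hx hy ha hb hab)⟩

theorem IsCompact.eventually_forall_lt_of_monotone {X ι α : Type*} [TopologicalSpace X]
    [Preorder ι] [IsDirectedOrder ι] [Nonempty ι] [LinearOrder α] [TopologicalSpace α]
    [OrderClosedTopology α] {K : Set X} (hK : IsCompact K) {φ : ι → X → α} {ψ : X → α}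
    (hmono : ∀ x, Monotone (φ · x)) (hφ : ∀ t, Continuous (φ t)) (hψ : Continuous ψ)
    (hlim : ∀ x ∈ K, ∀ᶠ t in atTop, ψ x < φ t x) : ∀ᶠ t in atTop, ∀ x ∈ K, ψ x < φ t x := by
  obtain ⟨t₀, ht₀⟩ := hK.elim_directed_cover (fun t => {x | ψ x < φ t x})
    (fun t => isOpen_lt hψ (hφ t)) (fun x hx => mem_iUnion.2 (hlim x hx).exists)
    (Monotone.directed_le fun _ _ hst x hx => hx.trans_le (hmono x hst))
  filter_upwards [eventually_ge_atTop t₀] with t ht x hx using (ht₀ hx).trans_le (hmono x ht)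

theorem sum_lt_sum_of_le_add_of_eq_sub {ι : Type*} [Fintype ι] [DecidableEq ι] (I : Finset ι)
    {F G c d : ι → ℝ} (hI : ∀ i ∈ I, F i ≤ G i + c i) (hIc : ∀ i ∉ I, F i = G i - d i)
    (h : ∑ i ∈ I, c i < ∑ i ∈ Iᶜ, d i) : ∑ i, F i < ∑ i, G i := by
  have h₁ := Finset.sum_le_sum hI
  have h₂ := Finset.sum_congr rfl fun i hi => hIc i (Finset.mem_compl.1 hi)
  rw [Finset.sum_add_distrib] at h₁
  rw [Finset.sum_sub_distrib] at h₂
  rw [← Finset.sum_add_sum_compl I F, ← Finset.sum_add_sum_compl I G]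
  linarith

namespace ConvexOn

section Line

variable {φ : ℝ → ℝ}

theorem monotone_add_one_sub (hφ : ConvexOn ℝ univ φ) : Monotone fun s => φ (s + 1) - φ s := by
  intro s t hst
  rcases hst.eq_or_lt with rfl | hst
  · rfl
  have h₁ := hφ.secant_mono (a := s) trivial trivial trivial (by linarith) (by linarith)
    (show s + 1 ≤ t + 1 by linarith)
  have h₂ := hφ.secant_mono (a := t + 1) trivial trivial trivial (by linarith) (by linarith)
    hst.le
  simp only [add_sub_cancel_left, div_one] at h₁ ⊢
  calc φ (s + 1) - φ s ≤ (φ (t + 1) - φ s) / (t + 1 - s) := h₁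
    _ = (φ s - φ (t + 1)) / (s - (t + 1)) := by rw [← neg_div_neg_eq]; ring_nf
    _ ≤ (φ t - φ (t + 1)) / (t - (t + 1)) := h₂
    _ = φ (t + 1) - φ t := by rw [show t - (t + 1) = -1 by ring]; ring

/-- The unit increments are squeezed between the secant slopes over `[0, s]` and `[s, 2 s]`, both
of which tend to `c`. -/
theorem tendsto_add_one_sub (hφ : ConvexOn ℝ univ φ) {c : ℝ}
    (hc : Tendsto (fun s => φ s / s) atTop (𝓝 c)) :
    Tendsto (fun s => φ (s + 1) - φ s) atTop (𝓝 c) := by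
  have h2 : Tendsto (fun s : ℝ => 2 * s) atTop atTop := tendsto_id.const_mul_atTop two_pos
  have hlower : Tendsto (fun s => φ s / s - φ 0 / s) atTop (𝓝 c) := by
    simpa using hc.sub (tendsto_const_nhds.div_atTop tendsto_id)
  have hupper : Tendsto (fun s => 2 * (φ (2 * s) / (2 * s)) - φ s / s) atTop (𝓝 (2 * c - c)) :=
    ((hc.comp h2).const_mul 2).sub hc
  rw [two_mul, add_sub_cancel_right] at hupper
  refine tendsto_of_tendsto_of_tendsto_of_le_of_le' hlower hupper ?_ ?_
  · filter_upwards [eventually_gt_atTop 0] with s hs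
    have := hφ.secant_mono (a := s) trivial trivial trivial hs.ne (by linarith)
      (show 0 ≤ s + 1 by linarith)
    rw [add_sub_cancel_left, div_one] at this
    convert this using 1
    rw [← sub_div, ← neg_div_neg_eq]
    ring_nf
  · filter_upwards [eventually_ge_atTop 1] with s hs
    have := hφ.secant_mono (a := s) trivial trivial trivial (by linarith) (by linarith)
      (show s + 1 ≤ 2 * s by linarith)
    rw [add_sub_cancel_left, div_one] at this
    convert this using 1; field_simp; ring

theorem add_one_sub_le (hφ : ConvexOn ℝ univ φ) {c : ℝ}
    (hc : Tendsto (fun s => φ s / s) atTop (𝓝 c)) (s : ℝ) : φ (s + 1) - φ s ≤ c :=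
  hφ.monotone_add_one_sub.ge_of_tendsto (hφ.tendsto_add_one_sub hc) s

end Line

section VectorSpace

variable {V : Type*} [AddCommGroup V] [Module ℝ V] {g : V → ℝ}

theorem two_mul_le_add (hg : ConvexOn ℝ univ g) {a b c : V} (h : (2 : ℝ) • c = a + b) :
    2 * g c ≤ g a + g b := by
  have hc : c = (1 / 2 : ℝ) • a + (1 / 2 : ℝ) • b := by
    rw [← smul_add, ← h, smul_smul]; norm_num
  have := hg.2 (mem_univ a) (mem_univ b) (show (0 : ℝ) ≤ 1 / 2 by norm_num)
    (show (0 : ℝ) ≤ 1 / 2 by norm_num) (by norm_num)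
  rw [← hc, smul_eq_mul, smul_eq_mul] at this
  linarith

theorem comp_add_smul (hg : ConvexOn ℝ univ g) (x v : V) :
    ConvexOn ℝ univ fun s : ℝ => g (x + s • v) := by
  simpa [Function.comp_def, AffineMap.lineMap_apply_module', add_comm x]
    using hg.comp_affineMap (AffineMap.lineMap x (x + v))

/-- Midpoint convexity bounds `g (x + t • v)` above through `g ((2 * t) • v)` and below through
`g ((t / 2) • v)`. -/
theorem tendsto_add_smul_div (hg : ConvexOn ℝ univ g) {v : V} {c : ℝ}
    (hc : Tendsto (fun t => g (t • v) / t) atTop (𝓝 c)) (x : V) :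
    Tendsto (fun t => g (x + t • v) / t) atTop (𝓝 c) := by
  have hlower : Tendsto (fun t => g ((t / 2) • v) / (t / 2) - g (-x) / t) atTop (𝓝 c) := by
    simpa using (hc.comp (tendsto_id.atTop_div_const two_pos)).sub
      (tendsto_const_nhds.div_atTop tendsto_id)
  have hupper : Tendsto (fun t => g ((2 : ℝ) • x) / (2 * t) + g ((2 * t) • v) / (2 * t))
      atTop (𝓝 c) := by
    simpa using (tendsto_const_nhds.div_atTop (tendsto_id.const_mul_atTop two_pos)).add
      (hc.comp (tendsto_id.const_mul_atTop two_pos))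
  refine tendsto_of_tendsto_of_tendsto_of_le_of_le' hlower hupper ?_ ?_ <;>
    filter_upwards [eventually_gt_atTop 0] with t ht
  · have := hg.two_mul_le_add (a := x + t • v) (b := -x) (c := (t / 2) • v) (by module)
    rw [div_div_eq_mul_div, div_sub_div_same]
    gcongr
    linarith
  · have := hg.two_mul_le_add (a := (2 : ℝ) • x) (b := (2 * t) • v) (c := x + t • v) (by module)
    rw [← mul_div_mul_left (g (x + t • v)) t two_ne_zero, ← add_div]
    gcongr

theorem le_add_of_tendsto_smul_div (hg : ConvexOn ℝ univ g) {v : V} {c : ℝ}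
    (hc : Tendsto (fun t => g (t • v) / t) atTop (𝓝 c)) (x : V) : g (x + v) ≤ g x + c := by
  have := (hg.comp_add_smul x v).add_one_sub_le (hg.tendsto_add_smul_div hc x) 0
  simp only [zero_add, one_smul, zero_smul, add_zero] at this
  linarith

theorem monotone_sub_smul_sub (hg : ConvexOn ℝ univ g) (x v : V) :
    Monotone fun s : ℝ => g (x - (s + 1) • v) - g (x - s • v) := by
  simpa only [smul_neg, ← sub_eq_add_neg] using (hg.comp_add_smul x (-v)).monotone_add_one_sub

theorem tendsto_sub_smul_sub (hg : ConvexOn ℝ univ g) (heven : Function.Even g) {v : V} {c : ℝ}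
    (hc : Tendsto (fun t => g (t • v) / t) atTop (𝓝 c)) (x : V) :
    Tendsto (fun s : ℝ => g (x - (s + 1) • v) - g (x - s • v)) atTop (𝓝 c) := by
  have hc' : Tendsto (fun t => g (t • -v) / t) atTop (𝓝 c) := by
    simpa only [smul_neg, show ∀ w, g (-w) = g w from heven] using hc
  simpa only [smul_neg, ← sub_eq_add_neg]
    using (hg.comp_add_smul x (-v)).tendsto_add_one_sub (hg.tendsto_add_smul_div hc' x)

theorem convexOn_of_tendsto_smul_div (hg : ConvexOn ℝ univ g) {C : V → ℝ}
    (hC : ∀ u, Tendsto (fun t => g (t • u) / t) atTop (𝓝 (C u))) : ConvexOn ℝ univ C := by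
  refine convexOn_of_tendsto (l := atTop) ?_ convex_univ fun u _ => hC u
  filter_upwards [eventually_gt_atTop 0] with t ht
  refine ⟨convex_univ, fun x _ y _ a b ha hb hab => ?_⟩
  calc g (t • (a • x + b • y)) / t = g (a • (t • x) + b • (t • y)) / t := by
        rw [smul_add, smul_comm t a, smul_comm t b]
    _ ≤ (a * g (t • x) + b * g (t • y)) / t := by
        gcongr; exact hg.2 (mem_univ _) (mem_univ _) ha hb hab
    _ = a • (g (t • x) / t) + b • (g (t • y) / t) := by simp only [smul_eq_mul]; ring

end VectorSpace

end ConvexOn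

section Sensors

variable {ι E : Type*} [Fintype ι] [DecidableEq ι] [NormedAddCommGroup E] [NormedSpace ℝ E]
  [FiniteDimensional ℝ E] {W : ι → Type*} [∀ i, NormedAddCommGroup (W i)]
  [∀ i, NormedSpace ℝ (W i)] [∀ i, FiniteDimensional ℝ (W i)]
  {g : ∀ i, W i → ℝ} {L : ∀ i, E →ₗ[ℝ] W i} {C : ι → E → ℝ}

theorem eventually_forall_sphere_sum_lt_sum_sub (hg : ∀ i, ConvexOn ℝ univ (g i))
    (heven : ∀ i, Function.Even (g i))
    (hC : ∀ i u, Tendsto (fun t => g i (t • L i u) / t) atTop (𝓝 (C i u))) (z : ∀ i, W i)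
    {I : Finset ι} (hI : ∀ u ≠ 0, ∑ i ∈ I, C i u < ∑ i ∈ Iᶜ, C i u) :
    ∀ᶠ t : ℝ in atTop, ∀ u ∈ Metric.sphere (0 : E) 1,
      ∑ i ∈ I, C i u < ∑ i ∈ Iᶜ, (g i (z i - (t + 1) • L i u) - g i (z i - t • L i u)) := by
  have hgcont i : Continuous (g i) := (hg i).locallyLipschitz.continuous
  have hCcont i : Continuous (C i) :=
    (((hg i).comp_linearMap (L i)).convexOn_of_tendsto_smul_div fun u => by
      simpa only [Function.comp_apply, map_smul] using hC i u).locallyLipschitz.continuous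
  have hLcont i : Continuous (L i) := (L i).continuous_of_finiteDimensional
  refine (isCompact_sphere 0 1).eventually_forall_lt_of_monotone
    (fun u _ _ hst => Finset.sum_le_sum fun i _ => (hg i).monotone_sub_smul_sub (z i) (L i u) hst)
    (fun t => by fun_prop) (by fun_prop) fun u hu => ?_
  have hu0 : u ≠ 0 := ne_zero_of_mem_unit_sphere ⟨u, hu⟩
  exact (tendsto_finsetSum _ fun i _ => (hg i).tendsto_sub_smul_sub (heven i) (hC i u) (z i))
    |>.eventually_const_lt (hI u hu0)

end Sensors

theorem cost_strictly_increasing_far_away_general (n m p : ℕ) (hpm : p < m)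
    (mi : Fin m → ℕ)
    (H : ∀ i : Fin m, Matrix (Fin (mi i)) (Fin n) ℝ)
    (f : ∀ i : Fin m, (Fin (mi i) → ℝ) → ℝ)
    (hconv : ∀ i, ConvexOn ℝ Set.univ (f i))
    (hsym : ∀ i u, f i u = f i (-u))
    (C : Fin m → EuclideanSpace ℝ (Fin n) → ℝ)
    (hC : ∀ (i : Fin m) (u : EuclideanSpace ℝ (Fin n)),
      Filter.Tendsto (fun t : ℝ => f i (t • (H i).mulVec u) / t) Filter.atTop (nhds (C i u)))
    (hmaj : ∀ u : EuclideanSpace ℝ (Fin n), u ≠ 0 →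
      ∀ I : Finset (Fin m), I.card = p → ∑ i ∈ I, C i u < ∑ i ∈ Iᶜ, C i u)
    (z : ∀ i : Fin m, Fin (mi i) → ℝ) :
    ∃ β : ℝ, 0 ≤ β ∧
      ∀ a : ∀ i : Fin m, Fin (mi i) → ℝ,
        (∃ I : Finset (Fin m), I.card ≤ p ∧ ∀ i ∉ I, a i = 0) →
        ∀ u : EuclideanSpace ℝ (Fin n), ‖u‖ = 1 → ∀ t : ℝ, β ≤ t →
          ∑ i, f i (z i + a i - t • (H i).mulVec u) <
            ∑ i, f i (z i + a i - (t + 1) • (H i).mulVec u) := by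
  let L i : EuclideanSpace ℝ (Fin n) →ₗ[ℝ] Fin (mi i) → ℝ :=
    (H i).mulVecLin ∘ₗ (WithLp.linearEquiv 2 ℝ (Fin n → ℝ)).toLinearMap
  have hmargin (I : Finset (Fin m)) : ∀ᶠ t : ℝ in atTop, I.card = p → ∀ u ∈ Metric.sphere 0 1,
      ∑ i ∈ I, C i u <
        ∑ i ∈ Iᶜ, (f i (z i - (t + 1) • (H i).mulVec u) - f i (z i - t • (H i).mulVec u)) := by
    by_cases hI : I.card = p
    · refine (eventually_forall_sphere_sum_lt_sum_sub (L := L) hconv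
        (fun i w => (hsym i w).symm) hC z fun u hu => hmaj u hu I hI).mono fun _ h _ => h
    · exact .of_forall fun _ h => absurd h hI
  obtain ⟨β, hβ⟩ := eventually_atTop.1 (eventually_all.2 hmargin)
  refine ⟨max β 0, le_max_right _ _, ?_⟩
  rintro a ⟨I₀, hI₀, ha⟩ u hu t ht
  obtain ⟨I, hI₀I, -, hIp⟩ := Finset.exists_subsuperset_card_eq (Finset.subset_univ I₀) hI₀
    (by simpa using hpm.le)
  refine sum_lt_sum_of_le_add_of_eq_sub I (fun i _ => ?_) (fun i hi => ?_)
    (hβ t (le_of_max_le_left ht) I hIp u (by simpa using hu))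
  · convert (hconv i).le_add_of_tendsto_smul_div (hC i u)
      (z i + a i - (t + 1) • (H i).mulVec u) using 2
    module
  · rw [ha i fun h => hi (hI₀I h), add_zero]
    ring

/-- Key step of Theorem 1: under the sufficient condition, for every `z` there
is a `β ≥ 0` such that for every `(p,m)`-sparse attack `a`, every unit vector
`u` and every `t ≥ β`, moving the candidate estimate from `t • u` to
`(t+1) • u` strictly increases the total cost. -/
theorem cost_strictly_increasing_far_away (n m p : ℕ) (hpm : p < m)
    (mi : Fin m → ℕ)
    (H : ∀ i : Fin m, Matrix (Fin (mi i)) (Fin n) ℝ)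
    (f : ∀ i : Fin m, (Fin (mi i) → ℝ) → ℝ)
    (hconv : ∀ i, ConvexOn ℝ Set.univ (f i))
    (hsym : ∀ i u, f i u = f i (-u))
    (hnonneg : ∀ i u, 0 ≤ f i u)
    (hzero : ∀ i, f i 0 = 0)
    (C : Fin m → EuclideanSpace ℝ (Fin n) → ℝ)
    (hC : ∀ (i : Fin m) (u : EuclideanSpace ℝ (Fin n)),
      Filter.Tendsto (fun t : ℝ => f i (t • (H i).mulVec u) / t) Filter.atTop (nhds (C i u)))
    (hmaj : ∀ u : EuclideanSpace ℝ (Fin n), u ≠ 0 →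
      ∀ I : Finset (Fin m), I.card = p → ∑ i ∈ I, C i u < ∑ i ∈ Iᶜ, C i u)
    (z : ∀ i : Fin m, Fin (mi i) → ℝ) :
    ∃ β : ℝ, 0 ≤ β ∧
      ∀ a : ∀ i : Fin m, Fin (mi i) → ℝ,
        (∃ I : Finset (Fin m), I.card ≤ p ∧ ∀ i ∉ I, a i = 0) →
        ∀ u : EuclideanSpace ℝ (Fin n), ‖u‖ = 1 → ∀ t : ℝ, β ≤ t →
          ∑ i, f i (z i + a i - t • (H i).mulVec u) <
            ∑ i, f i (z i + a i - (t + 1) • (H i).mulVec u) :=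
  cost_strictly_increasing_far_away_general n m p hpm mi H f hconv hsym C hC hmaj z
end

section
/- (Sufficient condition for robustness.) Suppose that for all i ∈ {1,…,m} and all u ∈ ℝⁿ the limit C_i(u) := lim_{t→∞} f_i(t H_i u)/t exists and is finite, and that for every nonzero u ∈ ℝⁿ and every index set I ⊆ {1,…,m} with |I| = p one has Σ_{i∈I} C_i(u) < Σ_{i∉I} C_i(u). Then for every z = (z_1,…,z_m) there exists μ ≥ 0 such that for every (p,m)-sparse attack a and every x̂ ∈ ℝⁿ that minimizes x̂ ↦ Σ_{i=1}^m f_i(z_i + a_i − H_i x̂), one has ‖x̂‖ ≤ μ. -/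
/-!
Write `C i` for the recession function of `f i ∘ H i`. It is convex and positively homogeneous,
and convexity of `f i` gives `f i (y + H i u) ≤ f i y + C i u`. Comparing a minimizer `x̂` with
`0`, each attacked sensor `i ∈ I` contributes at most `C i x̂`, so
`∑_{i ∉ I} f i (z i - H i x̂) ≤ ∑_{i ∉ I} f i (z i) + ∑_{i ∈ I} C i x̂`.
The left side is convex in `x̂` with recession function `∑_{i ∉ I} C i`, which strictly dominates
`∑_{i ∈ I} C i` off the origin, so the inequality fails once `‖x̂‖` is large. Enlarging the support
of the attack to a set of size `p`, finitely many sets `I` give a uniform bound.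
-/

open Filter Topology Set Bornology

section Recession

variable {E : Type*} [AddCommGroup E] [Module ℝ E] {f : E → ℝ}

lemma convexOn_univ_sum {ι : Type*} (s : Finset ι) {g : ι → E → ℝ}
    (hg : ∀ i ∈ s, ConvexOn ℝ univ (g i)) : ConvexOn ℝ univ (fun x => ∑ i ∈ s, g i x) := by
  convert Finset.sum_induction g (ConvexOn ℝ univ) (fun _ _ => ConvexOn.add)
    (convexOn_const 0 convex_univ) hg using 1
  ext x
  exact (Finset.sum_apply x s g).symm

lemma ConvexOn.secant_mono_smul (hf : ConvexOn ℝ univ f) (x v : E) {s t : ℝ} (hs : 0 < s)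
    (hst : s ≤ t) : (f (x + s • v) - f x) / s ≤ (f (x + t • v) - f x) / t := by
  have hline : ConvexOn ℝ univ (fun r : ℝ => f (x + r • v)) :=
    (hf.translate_right x).comp_linearMap (LinearMap.toSpanSingleton ℝ E v)
  simpa using hline.secant_mono (mem_univ 0) (mem_univ s) (mem_univ t) hs.ne'
    (hs.trans_le hst).ne' hst

lemma tendsto_smul_smul_div {v : E} {c : ℝ}
    (hc : Tendsto (fun t : ℝ => f (t • v) / t) atTop (𝓝 c)) {s : ℝ} (hs : 0 < s) :
    Tendsto (fun t : ℝ => f (t • s • v) / t) atTop (𝓝 (s * c)) := by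
  refine ((hc.comp (tendsto_id.atTop_mul_const hs)).const_mul s).congr' ?_
  filter_upwards [eventually_gt_atTop 0] with t ht
  simp only [Function.comp_apply, id, smul_smul]
  field_simp

lemma tendsto_const_div_atTop_nhds_zero (a : ℝ) : Tendsto (fun t : ℝ => a / t) atTop (𝓝 0) :=
  tendsto_const_nhds.div_atTop tendsto_id

lemma ConvexOn.tendsto_add_smul_div_s11 (hf : ConvexOn ℝ univ f) {v : E} {c : ℝ}
    (hc : Tendsto (fun t : ℝ => f (t • v) / t) atTop (𝓝 c)) (x : E) :
    Tendsto (fun t : ℝ => f (x + t • v) / t) atTop (𝓝 c) := by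
  -- `x + t • v` is the midpoint of `2 • x` and `(2 * t) • v`, and `t • v` that of `x + t • v`
  -- and `-x + t • v`: this squeezes `f (x + t • v) / t` between two functions tending to `c`.
  let bound : E → ℝ → ℝ := fun y t => f ((2 : ℝ) • y) / (2 * t) + f ((2 * t) • v) / (2 * t)
  have hmid : ∀ a b : E, f ((1 / 2 : ℝ) • a + (1 / 2 : ℝ) • b) ≤ f a / 2 + f b / 2 := by
    intro a b
    have := hf.2 (mem_univ a) (mem_univ b) (show (0 : ℝ) ≤ 1 / 2 by norm_num)
      (show (0 : ℝ) ≤ 1 / 2 by norm_num) (by norm_num)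
    simp only [smul_eq_mul] at this
    linarith
  have hbound_le : ∀ y, ∀ t > 0, f (y + t • v) / t ≤ bound y t := by
    intro y t ht
    have h := hmid ((2 : ℝ) • y) ((2 * t) • v)
    rw [show (1 / 2 : ℝ) • (2 : ℝ) • y + (1 / 2 : ℝ) • (2 * t) • v = y + t • v by module] at h
    calc f (y + t • v) / t ≤ (f ((2 : ℝ) • y) / 2 + f ((2 * t) • v) / 2) / t := by gcongr
      _ = bound y t := by simp only [bound]; field_simp
  have hbound : ∀ y, Tendsto (bound y) atTop (𝓝 c) := by
    intro y
    have h2t : Tendsto (fun t : ℝ => 2 * t) atTop atTop := tendsto_id.const_mul_atTop two_pos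
    simpa using ((tendsto_const_div_atTop_nhds_zero (f ((2 : ℝ) • y))).comp h2t).add (hc.comp h2t)
  have hlower : Tendsto (fun t => 2 * (f (t • v) / t) - bound (-x) t) atTop (𝓝 c) := by
    simpa [two_mul] using (hc.const_mul 2).sub (hbound (-x))
  refine tendsto_of_tendsto_of_tendsto_of_le_of_le' hlower (hbound x) ?_ ?_
  · filter_upwards [eventually_gt_atTop 0] with t ht
    have h := hmid (x + t • v) (-x + t • v)
    rw [show (1 / 2 : ℝ) • (x + t • v) + (1 / 2 : ℝ) • (-x + t • v) = t • v by module] at h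
    have h' := hbound_le (-x) t ht
    calc 2 * (f (t • v) / t) - bound (-x) t
        ≤ 2 * (f (t • v) / t) - f (-x + t • v) / t := by linarith
      _ ≤ f (x + t • v) / t := by
        rw [← mul_div_assoc, div_sub_div_same, div_le_div_iff_of_pos_right ht]
        linarith
  · filter_upwards [eventually_gt_atTop 0] using hbound_le x

lemma ConvexOn.le_add_of_tendsto (hf : ConvexOn ℝ univ f) {v : E} {c : ℝ}
    (hc : Tendsto (fun t : ℝ => f (t • v) / t) atTop (𝓝 c)) (x : E) :
    f (x + v) ≤ f x + c := by
  have hslope : Tendsto (fun t : ℝ => (f (x + t • v) - f x) / t) atTop (𝓝 c) := by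
    simpa [sub_div] using
      (hf.tendsto_add_smul_div_s11 hc x).sub (tendsto_const_div_atTop_nhds_zero (f x))
  have h := ge_of_tendsto hslope <| (eventually_ge_atTop 1).mono fun t ht =>
    hf.secant_mono_smul x v one_pos ht
  simp only [one_smul, div_one] at h
  linarith

lemma ConvexOn.convexOn_of_tendsto_div (hf : ConvexOn ℝ univ f) {C : E → ℝ}
    (hC : ∀ u, Tendsto (fun t : ℝ => f (t • u) / t) atTop (𝓝 (C u))) : ConvexOn ℝ univ C := by
  refine ⟨convex_univ, fun u _ w _ a b ha hb hab => ?_⟩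
  refine le_of_tendsto_of_tendsto (hC _) (((hC u).const_mul a).add ((hC w).const_mul b)) ?_
  filter_upwards [eventually_gt_atTop 0] with t ht
  rw [smul_add, smul_comm t a, smul_comm t b, mul_div_assoc', mul_div_assoc', ← add_div,
    div_le_div_iff_of_pos_right ht]
  exact hf.2 (mem_univ _) (mem_univ _) ha hb hab

lemma apply_smul_of_tendsto_div {C : E → ℝ}
    (hC : ∀ u, Tendsto (fun t : ℝ => f (t • u) / t) atTop (𝓝 (C u))) {s : ℝ} (hs : 0 < s)
    (u : E) : C (s • u) = s * C u :=
  tendsto_nhds_unique (hC (s • u)) (tendsto_smul_smul_div (hC u) hs)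

end Recession

section Coercive

variable {E : Type*} [NormedAddCommGroup E] [NormedSpace ℝ E] [FiniteDimensional ℝ E]

lemma ConvexOn.continuous_of_univ {f : E → ℝ} (hf : ConvexOn ℝ univ f) : Continuous f :=
  continuousOn_univ.1 (hf.continuousOn isOpen_univ)

theorem ConvexOn.eventually_cobounded_add_lt {ψ κ ρ : E → ℝ} (hψ : ConvexOn ℝ univ ψ)
    (hκ : Continuous κ) (hκ_smul : ∀ s : ℝ, 0 < s → ∀ u, κ (s • u) = s * κ u)
    (hρ : ∀ u, Tendsto (fun t : ℝ => ψ (t • u) / t) atTop (𝓝 (ρ u)))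
    (hlt : ∀ u ≠ 0, κ u < ρ u) :
    ∀ᶠ x in cobounded E, ψ 0 + κ x < ψ x := by
  have hslope : ∀ w : E, ∀ {s t : ℝ}, 0 < s → s ≤ t →
      (ψ (s • w) - ψ 0) / s ≤ (ψ (t • w) - ψ 0) / t := fun w s t hs hst => by
    simpa only [zero_add] using hψ.secant_mono_smul 0 w hs hst
  -- The secant slopes of `ψ` increase to `ρ > κ`, so by compactness of the unit sphere a single
  -- slope, at `k + 1`, beats `κ` in every direction.
  let U : ℕ → Set E := fun k => {w | κ w < (ψ (((k : ℝ) + 1) • w) - ψ 0) / ((k : ℝ) + 1)}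
  have hU_open : ∀ k, IsOpen (U k) := fun k =>
    isOpen_lt hκ (((hψ.continuous_of_univ.comp (continuous_const_smul _)).sub
      continuous_const).div_const _)
  have hU_mono : Monotone U := fun k l hkl w hw =>
    hw.trans_le (hslope w k.cast_add_one_pos (by exact_mod_cast Nat.succ_le_succ hkl))
  have hcover : Metric.sphere (0 : E) 1 ⊆ ⋃ k, U k := by
    intro w hw
    have hw_lim : Tendsto (fun t : ℝ => (ψ (t • w) - ψ 0) / t) atTop (𝓝 (ρ w)) := by
      simpa [sub_div] using (hρ w).sub (tendsto_const_div_atTop_nhds_zero (ψ 0))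
    have hk : Tendsto (fun k : ℕ => (k : ℝ) + 1) atTop atTop :=
      tendsto_atTop_add_const_right _ 1 tendsto_natCast_atTop_atTop
    obtain ⟨k, hk⟩ := ((hw_lim.comp hk).eventually
      (lt_mem_nhds (hlt w (ne_zero_of_mem_unit_sphere ⟨w, hw⟩)))).exists
    exact mem_iUnion.2 ⟨k, hk⟩
  obtain ⟨k, hk⟩ := (isCompact_sphere (0 : E) 1).elim_directed_cover U hU_open hcover
    hU_mono.directed_le
  refine hasBasis_cobounded_norm.eventually_iff.2 ⟨k + 1, trivial, fun x hx => ?_⟩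
  have hx0 : 0 < ‖x‖ := k.cast_add_one_pos.trans_le hx
  set w := ‖x‖⁻¹ • x
  have hxw : ‖x‖ • w = x := smul_inv_smul₀ hx0.ne' x
  have hw : w ∈ Metric.sphere (0 : E) 1 := by
    simp [w, norm_smul, hx0.ne']
  calc ψ 0 + κ x = ψ 0 + ‖x‖ * κ w := by rw [← hκ_smul _ hx0, hxw]
    _ < ψ 0 + ‖x‖ * ((ψ (‖x‖ • w) - ψ 0) / ‖x‖) := by
      gcongr
      exact (hk hw).trans_le (hslope w k.cast_add_one_pos hx)
    _ = ψ x := by rw [hxw]; field_simp; ring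

end Coercive

section Robustness

variable {ι : Type*} [Fintype ι] [DecidableEq ι] {F : ι → Type*} [∀ i, AddCommGroup (F i)]
  [∀ i, Module ℝ (F i)] {f : ∀ i, F i → ℝ}

section Module

variable {E : Type*} [AddCommGroup E] [Module ℝ E] {A : ∀ i, E →ₗ[ℝ] F i} {C : ι → E → ℝ}

lemma sum_compl_le_of_sum_le (hconv : ∀ i, ConvexOn ℝ univ (f i))
    (hC : ∀ i u, Tendsto (fun t : ℝ => f i (t • A i u) / t) atTop (𝓝 (C i u)))
    {I : Finset ι} {a : ∀ i, F i} (ha : ∀ i ∉ I, a i = 0) (z : ∀ i, F i) {x : E}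
    (hx : ∑ i, f i (z i + a i - A i x) ≤ ∑ i, f i (z i + a i)) :
    ∑ i ∈ Iᶜ, f i (z i - A i x) ≤ ∑ i ∈ Iᶜ, f i (z i) + ∑ i ∈ I, C i x := by
  have hattacked :
      ∑ i ∈ I, f i (z i + a i) ≤ ∑ i ∈ I, f i (z i + a i - A i x) + ∑ i ∈ I, C i x := by
    rw [← Finset.sum_add_distrib]
    exact Finset.sum_le_sum fun i _ => by
      simpa using (hconv i).le_add_of_tendsto (hC i x) (z i + a i - A i x)
  have hclean : ∀ i ∈ Iᶜ, z i + a i = z i := fun i hi => by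
    rw [ha i (Finset.mem_compl.1 hi), add_zero]
  have hcompl_x : ∑ i ∈ Iᶜ, f i (z i + a i - A i x) = ∑ i ∈ Iᶜ, f i (z i - A i x) :=
    Finset.sum_congr rfl fun i hi => by rw [hclean i hi]
  have hcompl_0 : ∑ i ∈ Iᶜ, f i (z i + a i) = ∑ i ∈ Iᶜ, f i (z i) :=
    Finset.sum_congr rfl fun i hi => by rw [hclean i hi]
  rw [← I.sum_add_sum_compl, ← I.sum_add_sum_compl (fun i => f i (z i + a i))] at hx
  linarith

end Module

variable {E : Type*} [NormedAddCommGroup E] [NormedSpace ℝ E] [FiniteDimensional ℝ E]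
  {A : ∀ i, E →ₗ[ℝ] F i} {C : ι → E → ℝ}

theorem eventually_cobounded_sum_add_sum_lt (hconv : ∀ i, ConvexOn ℝ univ (f i))
    (hsym : ∀ i u, f i u = f i (-u))
    (hC : ∀ i u, Tendsto (fun t : ℝ => f i (t • A i u) / t) atTop (𝓝 (C i u)))
    {I : Finset ι} (hI : ∀ u ≠ 0, ∑ i ∈ I, C i u < ∑ i ∈ Iᶜ, C i u) (z : ∀ i, F i) :
    ∀ᶠ x in cobounded E, ∑ i ∈ Iᶜ, f i (z i) + ∑ i ∈ I, C i x < ∑ i ∈ Iᶜ, f i (z i - A i x) := by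
  have hφ : ∀ i u, Tendsto (fun t : ℝ => f i (A i (t • u)) / t) atTop (𝓝 (C i u)) := by
    simpa only [map_smul] using hC
  have hC_conv : ∀ i, ConvexOn ℝ univ (C i) := fun i =>
    ((hconv i).comp_linearMap (A i)).convexOn_of_tendsto_div (hφ i)
  have hψ : ConvexOn ℝ univ (fun x => ∑ i ∈ Iᶜ, f i (z i - A i x)) :=
    convexOn_univ_sum _ fun i _ => by
      convert ((hconv i).translate_right (z i)).comp_linearMap (-A i) using 1 <;> ext <;>
        simp [sub_eq_add_neg]
  have hκ : Continuous (fun x => ∑ i ∈ I, C i x) :=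
    continuous_finsetSum _ fun i _ => (hC_conv i).continuous_of_univ
  have hκ_smul : ∀ s : ℝ, 0 < s → ∀ u, ∑ i ∈ I, C i (s • u) = s * ∑ i ∈ I, C i u := by
    intro s hs u
    rw [Finset.mul_sum]
    exact Finset.sum_congr rfl fun i _ =>
      apply_smul_of_tendsto_div (f := fun u => f i (A i u)) (hφ i) hs u
  have hρ : ∀ u, Tendsto (fun t : ℝ => (∑ i ∈ Iᶜ, f i (z i - A i (t • u))) / t) atTop
      (𝓝 (∑ i ∈ Iᶜ, C i u)) := by
    intro u
    simp only [Finset.sum_div]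
    refine tendsto_finsetSum _ fun i _ => ?_
    have hneg : Tendsto (fun t : ℝ => f i (t • -A i u) / t) atTop (𝓝 (C i u)) := by
      simpa only [smul_neg, ← hsym] using hC i u
    simpa [sub_eq_add_neg] using (hconv i).tendsto_add_smul_div_s11 hneg (z i)
  simpa using hψ.eventually_cobounded_add_lt hκ hκ_smul hρ hI

end Robustness

theorem sufficient_condition_for_robustness_general (n m p : ℕ) (hpm : p < m)
    (mi : Fin m → ℕ)
    (H : ∀ i : Fin m, Matrix (Fin (mi i)) (Fin n) ℝ)
    (f : ∀ i : Fin m, (Fin (mi i) → ℝ) → ℝ)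
    (hconv : ∀ i, ConvexOn ℝ Set.univ (f i))
    (hsym : ∀ i u, f i u = f i (-u))
    (C : Fin m → EuclideanSpace ℝ (Fin n) → ℝ)
    (hC : ∀ (i : Fin m) (u : EuclideanSpace ℝ (Fin n)),
      Filter.Tendsto (fun t : ℝ => f i (t • (H i).mulVec u) / t) Filter.atTop (nhds (C i u)))
    (hmaj : ∀ u : EuclideanSpace ℝ (Fin n), u ≠ 0 →
      ∀ I : Finset (Fin m), I.card = p → ∑ i ∈ I, C i u < ∑ i ∈ Iᶜ, C i u)
    (z : ∀ i : Fin m, Fin (mi i) → ℝ) :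
    ∃ μ : ℝ, 0 ≤ μ ∧
      ∀ a : ∀ i : Fin m, Fin (mi i) → ℝ,
        (∃ I : Finset (Fin m), I.card ≤ p ∧ ∀ i ∉ I, a i = 0) →
        ∀ xhat : EuclideanSpace ℝ (Fin n),
          (∀ x : EuclideanSpace ℝ (Fin n),
            ∑ i, f i (z i + a i - (H i).mulVec xhat) ≤
              ∑ i, f i (z i + a i - (H i).mulVec x)) →
          ‖xhat‖ ≤ μ := by
  let A i : EuclideanSpace ℝ (Fin n) →ₗ[ℝ] Fin (mi i) → ℝ :=
    (H i).mulVecLin ∘ₗ (WithLp.linearEquiv 2 ℝ (Fin n → ℝ)).toLinearMap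
  have hA : ∀ i u, Tendsto (fun t : ℝ => f i (t • A i u) / t) atTop (𝓝 (C i u)) := hC
  have hgrowth : ∀ᶠ x in cobounded (EuclideanSpace ℝ (Fin n)), ∀ I : Finset (Fin m),
      I.card = p → ∑ i ∈ Iᶜ, f i (z i) + ∑ i ∈ I, C i x < ∑ i ∈ Iᶜ, f i (z i - A i x) :=
    eventually_all.2 fun I => eventually_imp_distrib_left.2 fun hI =>
      eventually_cobounded_sum_add_sum_lt hconv hsym hA (fun u hu => hmaj u hu I hI) z
  obtain ⟨r, -, hr⟩ := hasBasis_cobounded_norm.eventually_iff.1 hgrowth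
  refine ⟨max r 0, le_max_right r 0, ?_⟩
  rintro a ⟨I₀, hI₀, ha⟩ xhat hmin
  obtain ⟨I, hI₀I, hI⟩ := Finset.exists_superset_card_eq hI₀ (by simpa using hpm.le)
  by_contra! hxhat
  refine (hr (le_max_left r 0 |>.trans hxhat.le) I hI).not_ge <|
    sum_compl_le_of_sum_le hconv hA (fun i hi => ha i fun hi₀ => hi (hI₀I hi₀)) z ?_
  simpa [A] using hmin 0

/-- Theorem 1 (sufficient condition for robustness): if all the limits
`C i u = lim_{t→∞} f i (t • H i u) / t` exist and for every nonzero `u` and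
every index set `I` with `|I| = p` one has `∑_{i∈I} C i u < ∑_{i∉I} C i u`,
then for every `z` there exists `μ ≥ 0` bounding the norm of every minimizer
of the attacked cost, for every `(p,m)`-sparse attack. -/
theorem sufficient_condition_for_robustness (n m p : ℕ) (hpm : p < m)
    (mi : Fin m → ℕ)
    (H : ∀ i : Fin m, Matrix (Fin (mi i)) (Fin n) ℝ)
    (f : ∀ i : Fin m, (Fin (mi i) → ℝ) → ℝ)
    (hconv : ∀ i, ConvexOn ℝ Set.univ (f i))
    (hsym : ∀ i u, f i u = f i (-u))
    (hnonneg : ∀ i u, 0 ≤ f i u)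
    (hzero : ∀ i, f i 0 = 0)
    (C : Fin m → EuclideanSpace ℝ (Fin n) → ℝ)
    (hC : ∀ (i : Fin m) (u : EuclideanSpace ℝ (Fin n)),
      Filter.Tendsto (fun t : ℝ => f i (t • (H i).mulVec u) / t) Filter.atTop (nhds (C i u)))
    (hmaj : ∀ u : EuclideanSpace ℝ (Fin n), u ≠ 0 →
      ∀ I : Finset (Fin m), I.card = p → ∑ i ∈ I, C i u < ∑ i ∈ Iᶜ, C i u)
    (z : ∀ i : Fin m, Fin (mi i) → ℝ) :
    ∃ μ : ℝ, 0 ≤ μ ∧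
      ∀ a : ∀ i : Fin m, Fin (mi i) → ℝ,
        (∃ I : Finset (Fin m), I.card ≤ p ∧ ∀ i ∉ I, a i = 0) →
        ∀ xhat : EuclideanSpace ℝ (Fin n),
          (∀ x : EuclideanSpace ℝ (Fin n),
            ∑ i, f i (z i + a i - (H i).mulVec xhat) ≤
              ∑ i, f i (z i + a i - (H i).mulVec x)) →
          ‖xhat‖ ≤ μ :=
  sufficient_condition_for_robustness_general n m p hpm mi H f hconv hsym C hC hmaj z
end
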